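/- arXiv:2602.19425 — 8 statements merged into one kernel-verified Lean document; each statement's English description precedes it below -/
import Mathlib

section
/- Let p ∈ ℤ and q ≥ 1 be coprime integers, let r ≥ 1 be an integer and ε ∈ {+1,-1} a sign such that 0 ≤ ε(qx - p) < 1/r for a real number x. If I is an interval of q consecutive integers such that εI is contained entirely in {-r, ..., -1} or entirely in {0, ..., r}, then the map j ↦ ⌊q{jx}⌋ restricted to I is a bijection onto {0, 1, ..., q-1}. -/
/-!
Put `δ = ε(qx - p) ∈ [0, 1/r)`, so that `q·jx = jp + (εj)δ`. Since `⌊q{y}⌋ = ⌊qy⌋ mod q`, the map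
sends `j` to `(jp + ⌊(εj)δ⌋) mod q`, and the condition on `εI` makes `⌊(εj)δ⌋` constant on `I`
(`0` on `{0, ..., r}`, `⌊-δ⌋` on `{-r, ..., -1}`). As `p` is a unit mod `q`, `j ↦ (jp + c) mod q`
is injective on `q` consecutive integers, hence a bijection onto `{0, ..., q-1}` by counting.
-/

open Set

theorem Set.bijOn_of_injOn_of_ncard_le {α β : Type*} {f : α → β} {s : Set α} {t : Set β}
    (hmaps : MapsTo f s t) (hinj : InjOn f s) (hcard : t.ncard ≤ s.ncard)
    (ht : t.Finite := by toFinite_tac) : BijOn f s t := by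
  refine ⟨hmaps, hinj, ?_⟩
  rw [SurjOn, eq_of_subset_of_ncard_le hmaps.image_subset (by rwa [hinj.ncard_image]) ht]

theorem Int.ncard_Icc_add_sub_one (k n : ℤ) : (Icc k (k + n - 1)).ncard = n.toNat := by
  rw [← Finset.coe_Icc, ncard_coe_finset, Int.card_Icc]
  congr 1
  ring

section FloorRing

variable {K : Type*} [Field K] [LinearOrder K] [IsOrderedRing K] [FloorRing K]

theorem Int.floor_mul_fract {q : ℤ} (hq : 0 ≤ q) (y : K) :
    ⌊(q : K) * Int.fract y⌋ = ⌊q * y⌋ % q := by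
  obtain rfl | hq := hq.eq_or_lt
  · simp
  have hfloor : ⌊y⌋ = ⌊q * y⌋ / q := by
    rw [← Int.floor_div_cast_of_nonneg hq.le, mul_div_cancel_left₀ _ (by positivity)]
  rw [Int.emod_def, ← hfloor, Int.fract, mul_sub, sub_eq_add_neg, ← Int.cast_mul, ← Int.cast_neg,
    Int.floor_add_intCast, sub_eq_add_neg]

variable {δ : K} {r m : ℤ}

theorem Int.floor_intCast_mul_eq_zero (hδ : 0 ≤ δ) (hrδ : r * δ < 1) (hm : m ∈ Icc 0 r) :
    ⌊(m : K) * δ⌋ = 0 := by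
  have hm0 : (0 : K) ≤ m := by exact_mod_cast hm.1
  have hmr : (m : K) ≤ r := by exact_mod_cast hm.2
  rw [Int.floor_eq_zero_iff]
  exact ⟨by positivity, by nlinarith⟩

theorem Int.floor_intCast_mul_eq_floor_neg (hδ : 0 ≤ δ) (hrδ : r * δ < 1)
    (hm : m ∈ Icc (-r) (-1)) : ⌊(m : K) * δ⌋ = ⌊-δ⌋ := by
  obtain rfl | hδ := hδ.eq_or_lt
  · simp
  have hrm : (-r : K) ≤ m := by exact_mod_cast hm.1
  have hm1 : (m : K) ≤ -1 := by exact_mod_cast hm.2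
  have hrδ' : δ < 1 := by nlinarith
  have hmδ : ⌊(m : K) * δ⌋ = -1 := Int.floor_eq_iff.2 ⟨by push_cast; nlinarith, by push_cast; nlinarith⟩
  have hnegδ : ⌊-δ⌋ = -1 := Int.floor_eq_iff.2 ⟨by push_cast; linarith, by push_cast; linarith⟩
  rw [hmδ, hnegδ]

end FloorRing

theorem IsCoprime.bijOn_mul_add_emod {p q : ℤ} (hpq : IsCoprime p q) (hq : 0 < q) (c k : ℤ) :
    BijOn (fun j : ℤ => (j * p + c) % q) (Icc k (k + q - 1)) (Icc 0 (q - 1)) := by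
  refine Set.bijOn_of_injOn_of_ncard_le ?_ ?_ ?_
  · intro j _
    exact ⟨Int.emod_nonneg _ hq.ne', by linarith [Int.emod_lt_of_pos (j * p + c) hq]⟩
  · intro j₁ h₁ j₂ h₂ he
    have hdvd : q ∣ (j₁ - j₂) * p := by
      simpa [sub_mul] using (Int.ModEq.dvd he.symm : q ∣ j₁ * p + c - (j₂ * p + c))
    have := Int.eq_zero_of_abs_lt_dvd (hpq.symm.dvd_of_dvd_mul_right hdvd)
      (abs_sub_lt_iff.2 ⟨by linarith [h₁.2, h₂.1], by linarith [h₁.1, h₂.2]⟩)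
    linarith
  · rw [Int.ncard_Icc_add_sub_one, show q - 1 = 0 + q - 1 by ring, Int.ncard_Icc_add_sub_one]

/-- Equidistribution of irrational orbits: if `p, q` are coprime with `q ≥ 1`, `r ≥ 1`,
`ε = ±1` and `0 ≤ ε(qx - p) < 1/r`, then for any interval `I` of `q` consecutive integers
with `εI ⊆ {-r, ..., -1}` or `εI ⊆ {0, ..., r}`, the map `j ↦ ⌊q {j x}⌋` restricted to `I`
is a bijection onto `{0, 1, ..., q-1}`. -/
theorem stmt3 (x : ℝ) (p q : ℤ) (hq : 1 ≤ q) (hpq : IsCoprime p q)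
    (r : ℤ) (hr : 1 ≤ r) (ε : ℤ) (hε : ε = 1 ∨ ε = -1)
    (hx0 : 0 ≤ (ε : ℝ) * ((q : ℝ) * x - (p : ℝ)))
    (hx1 : (ε : ℝ) * ((q : ℝ) * x - (p : ℝ)) < 1 / (r : ℝ))
    (k : ℤ)
    (hI : (∀ j ∈ Set.Icc k (k + q - 1), ε * j ∈ Set.Icc (-r) (-1)) ∨
          (∀ j ∈ Set.Icc k (k + q - 1), ε * j ∈ Set.Icc 0 r)) :
    Set.BijOn (fun j : ℤ => ⌊(q : ℝ) * Int.fract ((j : ℝ) * x)⌋)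
      (Set.Icc k (k + q - 1)) (Set.Icc 0 (q - 1)) := by
  set δ := (ε : ℝ) * ((q : ℝ) * x - (p : ℝ))
  have hrδ : r * δ < 1 := by
    rwa [lt_div_iff₀ (by exact_mod_cast hr), mul_comm] at hx1
  have hε2 : (ε : ℝ) * ε = 1 := by rcases hε with rfl | rfl <;> norm_num
  have hqjx (j : ℤ) : (q : ℝ) * (j * x) = (j * p : ℤ) + (ε * j : ℤ) * δ := by
    push_cast
    linear_combination (j * (q * x - p)) * hε2.symm
  obtain ⟨c, hc⟩ : ∃ c : ℤ, ∀ j ∈ Icc k (k + q - 1), ⌊((ε * j : ℤ) : ℝ) * δ⌋ = c := by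
    rcases hI with hneg | hnonneg
    · exact ⟨_, fun j hj => Int.floor_intCast_mul_eq_floor_neg hx0 hrδ (hneg j hj)⟩
    · exact ⟨_, fun j hj => Int.floor_intCast_mul_eq_zero hx0 hrδ (hnonneg j hj)⟩
  refine (hpq.bijOn_mul_add_emod (by omega) c k).congr fun j hj => ?_
  simp only
  rw [Int.floor_mul_fract (by omega), hqjx, Int.floor_intCast_add, hc j hj]
end

section
/- Let p ∈ ℤ and q ≥ 1 be coprime, r ≥ 1 an integer, ε = ±1 a sign, and x real with 0 < ε(qx - p) < 1/r. Then for every integer j with εj ∈ {1, ..., r}, one has ⌊q{jx}⌋ ≡ pj (mod q), and for every integer j with εj ∈ {-r, ..., -1}, one has ⌊q{jx}⌋ ≡ pj - 1 (mod q). -/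
/-!
Write `δ = q x - p`. Since `q {j x} = p j - q ⌊j x⌋ + j δ` with `p j - q ⌊j x⌋` an integer,
`⌊q {j x}⌋ ≡ p j + ⌊j δ⌋ (mod q)`. Now `j δ = (ε j)(ε δ)` with `0 < ε δ < 1/r`, so `j δ` lies in
`(0, 1)` when `ε j ∈ {1, …, r}` and in `(-1, 0)` when `ε j ∈ {-r, …, -1}`.
-/

section FloorRing

variable {α : Type*} [Field α] [LinearOrder α] [IsStrictOrderedRing α] [FloorRing α]

theorem Int.floor_intCast_mul_fract_eq (p q j : ℤ) (x : α) :
    ⌊(q : α) * Int.fract ((j : α) * x)⌋ = p * j - q * ⌊(j : α) * x⌋ + ⌊(j : α) * (q * x - p)⌋ := by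
  have h : (q : α) * Int.fract ((j : α) * x) =
      ((p * j - q * ⌊(j : α) * x⌋ : ℤ) : α) + (j : α) * (q * x - p) := by
    rw [Int.fract]; push_cast; ring
  rw [h, Int.floor_intCast_add]

theorem Int.floor_intCast_mul_fract_modEq (p q j : ℤ) (x : α) :
    ⌊(q : α) * Int.fract ((j : α) * x)⌋ ≡ p * j + ⌊(j : α) * (q * x - p)⌋ [ZMOD q] := by
  rw [Int.floor_intCast_mul_fract_eq p q j x, Int.modEq_iff_dvd]
  exact ⟨⌊(j : α) * x⌋, by ring⟩

variable {t : α} {r n : ℤ}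

theorem intCast_mul_lt_one_of_lt_one_div (ht1 : t < 1 / r) (hr : 0 < r) : (r : α) * t < 1 := by
  rwa [lt_div_iff₀' (by exact_mod_cast hr)] at ht1

theorem Int.floor_intCast_mul_eq_zero_s4 (ht0 : 0 < t) (ht1 : t < 1 / r) (hn : n ∈ Set.Icc 1 r) :
    ⌊(n : α) * t⌋ = 0 := by
  obtain ⟨hn1, hnr⟩ := hn
  have hn0 : (0 : α) ≤ n := by exact_mod_cast (zero_le_one.trans hn1)
  have hnr' : (n : α) ≤ r := by exact_mod_cast hnr
  rw [Int.floor_eq_zero_iff]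
  refine ⟨mul_nonneg hn0 ht0.le, ?_⟩
  calc (n : α) * t ≤ r * t := mul_le_mul_of_nonneg_right hnr' ht0.le
    _ < 1 := intCast_mul_lt_one_of_lt_one_div ht1 (by omega)

theorem Int.floor_intCast_mul_eq_neg_one (ht0 : 0 < t) (ht1 : t < 1 / r)
    (hn : n ∈ Set.Icc (-r) (-1)) : ⌊(n : α) * t⌋ = -1 := by
  obtain ⟨hrn, hn1⟩ := hn
  have hn0 : (n : α) < 0 := by exact_mod_cast hn1.trans_lt neg_one_lt_zero
  have hrn' : (-r : α) ≤ n := by exact_mod_cast hrn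
  rw [Int.floor_eq_iff]
  refine ⟨?_, by simpa using mul_neg_of_neg_of_pos hn0 ht0⟩
  have hrt := intCast_mul_lt_one_of_lt_one_div ht1 (by omega)
  calc ((-1 : ℤ) : α) ≤ -r * t := by push_cast; linarith
    _ ≤ n * t := mul_le_mul_of_nonneg_right hrn' ht0.le

end FloorRing

theorem stmt4_general (x : ℝ) (p q : ℤ)
    (r : ℤ) (ε : ℤ) (hε : ε = 1 ∨ ε = -1)
    (hx0 : 0 < (ε : ℝ) * ((q : ℝ) * x - (p : ℝ)))
    (hx1 : (ε : ℝ) * ((q : ℝ) * x - (p : ℝ)) < 1 / (r : ℝ)) :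
    (∀ j : ℤ, ε * j ∈ Set.Icc 1 r →
      ⌊(q : ℝ) * Int.fract ((j : ℝ) * x)⌋ ≡ p * j [ZMOD q]) ∧
    (∀ j : ℤ, ε * j ∈ Set.Icc (-r) (-1) →
      ⌊(q : ℝ) * Int.fract ((j : ℝ) * x)⌋ ≡ p * j - 1 [ZMOD q]) := by
  have hsign : ∀ j : ℤ,
      (j : ℝ) * (q * x - p) = ((ε * j : ℤ) : ℝ) * (ε * (q * x - p)) := by
    rcases hε with rfl | rfl <;> intro j <;> push_cast <;> ring
  refine ⟨fun j hj => ?_, fun j hj => ?_⟩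
  · have h := Int.floor_intCast_mul_fract_modEq p q j x
    rwa [hsign, Int.floor_intCast_mul_eq_zero_s4 hx0 hx1 hj, add_zero] at h
  · have h := Int.floor_intCast_mul_fract_modEq p q j x
    rwa [hsign, Int.floor_intCast_mul_eq_neg_one hx0 hx1 hj, ← sub_eq_add_neg] at h

/-- If `p, q` are coprime with `q ≥ 1`, `r ≥ 1`, `ε = ±1` and `0 < ε(qx - p) < 1/r`, then
for `εj ∈ {1, ..., r}` one has `⌊q {j x}⌋ ≡ p j (mod q)`, and for `εj ∈ {-r, ..., -1}` one
has `⌊q {j x}⌋ ≡ p j - 1 (mod q)`. -/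
theorem stmt4 (x : ℝ) (p q : ℤ) (hq : 1 ≤ q) (hpq : IsCoprime p q)
    (r : ℤ) (hr : 1 ≤ r) (ε : ℤ) (hε : ε = 1 ∨ ε = -1)
    (hx0 : 0 < (ε : ℝ) * ((q : ℝ) * x - (p : ℝ)))
    (hx1 : (ε : ℝ) * ((q : ℝ) * x - (p : ℝ)) < 1 / (r : ℝ)) :
    (∀ j : ℤ, ε * j ∈ Set.Icc 1 r →
      ⌊(q : ℝ) * Int.fract ((j : ℝ) * x)⌋ ≡ p * j [ZMOD q]) ∧
    (∀ j : ℤ, ε * j ∈ Set.Icc (-r) (-1) →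
      ⌊(q : ℝ) * Int.fract ((j : ℝ) * x)⌋ ≡ p * j - 1 [ZMOD q]) :=
  stmt4_general x p q r ε hε hx0 hx1
end

section
/- For an irrational real number x, the following two quantities are equal: limsup over n → ∞ of (log q_{n+1})/q_n, where p_n/q_n are the continued fraction convergents of x, and limsup over integers q → ∞ of log(1/dist(qx,ℤ))/q. -/
open Filter
open scoped ENNReal

/-- Distance from a real number to the nearest integer. -/
noncomputable def distZ (y : ℝ) : ℝ := |y - round y|

/-- Iterates of the Gauss map. -/
noncomputable def cfX (x : ℝ) : ℕ → ℝ
  | 0 => x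
  | n + 1 => (Int.fract (cfX x n))⁻¹

/-- Denominators of convergents, shifted by 2: `convQ x (n+2) = q_n`. -/
noncomputable def convQ (x : ℝ) : ℕ → ℤ
  | 0 => 1
  | 1 => 0
  | n + 2 => ⌊cfX x n⌋ * convQ x (n + 1) + convQ x n

/-- The exponential type of `x`: `limsup_{q→∞} log(1/dist(qx,ℤ))/q`, valued in `[0,∞]`. -/
noncomputable def Bsup (x : ℝ) : ℝ≥0∞ :=
  Filter.limsup (fun q : ℕ => ENNReal.ofReal (Real.log (distZ ((q : ℝ) * x))⁻¹ / (q : ℝ)))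
    Filter.atTop

/-!
Write `q_n = convQ x (n + 2)` and `‖y‖ = distZ y`. Along `q = q_n` the classical estimate
`‖q_n x‖ ≤ 1 / q_{n+1}` gives `log q_{n+1} / q_n ≤ log (1 / ‖q_n x‖) / q_n`, whence `≤`.

Conversely let `q_k ≤ q < q_{k+1}`. For `q < q_n` and any integer `p`, the fraction `p / q` differs
from the reduced fraction `p_n / q_n`, so `|q p_n - p q_n| ≥ 1` and `q_n |q x - p| ≥ 1 - q / q_{n+1}`.
Taking `n = k + 1` or `n = k + 2`, whichever has `q_{n+1} ≥ 2 q`, gives `‖q x‖ ≥ 1 / (4 q_{k+1})`,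
so `log (1 / ‖q x‖) / q ≤ log q_{k+1} / q_k + log 4 / q_k`, and the last term tends to `0`.
-/

/-- Numerators of the convergents, shifted by 2 as in `convQ`. -/
noncomputable def convP (x : ℝ) : ℕ → ℤ
  | 0 => 0
  | 1 => 1
  | n + 2 => ⌊cfX x n⌋ * convP x (n + 1) + convP x n

lemma cfX_succ (x : ℝ) : ∀ n, cfX x (n + 1) = cfX (Int.fract x)⁻¹ n
  | 0 => rfl
  | n + 1 => by rw [cfX, cfX_succ x n, cfX]

lemma Irrational.fract_inv {x : ℝ} (hx : Irrational x) : Irrational (Int.fract x)⁻¹ :=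
  (hx.sub_intCast ⌊x⌋).inv

namespace GenContFract

lemma of_s_get?_eq_floor_cfX {x : ℝ} (hx : Irrational x) (n : ℕ) :
    (GenContFract.of x).s.get? n = some ⟨1, (⌊cfX x (n + 1)⌋ : ℝ)⟩ := by
  induction n generalizing x with
  | zero => exact of_s_head (Int.fract_ne_zero_iff.2 fun ⟨m, hm⟩ => hx.ne_int m hm.symm)
  | succ n ih => rw [of_s_succ, ih hx.fract_inv, ← cfX_succ]

lemma of_not_terminatedAt_of_irrational {x : ℝ} (hx : Irrational x) (n : ℕ) :
    ¬(GenContFract.of x).TerminatedAt n := by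
  simp [terminatedAt_iff_s_none, of_s_get?_eq_floor_cfX hx n]

lemma of_conts_eq_convP_convQ {x : ℝ} (hx : Irrational x) :
    ∀ n, (GenContFract.of x).conts n = ⟨(convP x (n + 2) : ℝ), (convQ x (n + 2) : ℝ)⟩
  | 0 => by simp [zeroth_cont_eq_h_one, of_h_eq_floor, convP, convQ, cfX]
  | 1 => by
    simp [first_cont_eq (of_s_get?_eq_floor_cfX hx 0), of_h_eq_floor, convP, convQ, cfX]
  | n + 2 => by
    rw [conts_recurrence (of_s_get?_eq_floor_cfX hx (n + 1)) (of_conts_eq_convP_convQ hx n)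
      (of_conts_eq_convP_convQ hx (n + 1))]
    simp [convP, convQ]

lemma of_nums_eq_convP {x : ℝ} (hx : Irrational x) (n : ℕ) :
    (GenContFract.of x).nums n = convP x (n + 2) := by
  rw [num_eq_conts_a, of_conts_eq_convP_convQ hx]

lemma of_dens_eq_convQ {x : ℝ} (hx : Irrational x) (n : ℕ) :
    (GenContFract.of x).dens n = convQ x (n + 2) := by
  rw [den_eq_conts_b, of_conts_eq_convP_convQ hx]

end GenContFract

open GenContFract

section Convergents

variable {x : ℝ} (hx : Irrational x)
include hx

lemma one_le_floor_cfX_succ (n : ℕ) : 1 ≤ ⌊cfX x (n + 1)⌋ := by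
  exact_mod_cast of_one_le_get?_partDen (b := (⌊cfX x (n + 1)⌋ : ℝ))
    (partDen_eq_s_b (of_s_get?_eq_floor_cfX hx n))

lemma fib_succ_le_convQ (n : ℕ) : (Nat.fib (n + 1) : ℤ) ≤ convQ x (n + 2) := by
  have h := succ_nth_fib_le_of_nth_den (Or.inr (of_not_terminatedAt_of_irrational hx (n - 1)))
  rw [of_dens_eq_convQ hx] at h
  exact_mod_cast h

lemma one_le_convQ (n : ℕ) : 1 ≤ convQ x (n + 2) :=
  le_trans (by exact_mod_cast Nat.fib_pos.2 n.succ_pos) (fib_succ_le_convQ hx n)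

lemma monotone_convQ : Monotone fun n => convQ x (n + 2) :=
  monotone_nat_of_le_succ fun n => by
    have h := of_den_mono (v := x) (n := n)
    rw [of_dens_eq_convQ hx, of_dens_eq_convQ hx] at h
    exact_mod_cast h

lemma tendsto_convQ : Tendsto (fun n => convQ x (n + 2)) atTop atTop :=
  tendsto_atTop_mono (fib_succ_le_convQ hx) <| tendsto_natCast_atTop_atTop.comp <|
    (tendsto_add_atTop_iff_nat (f := fun n => Nat.fib (n + 1)) 1).1
      Nat.fib_add_two_strictMono.tendsto_atTop

lemma convQ_add_convQ_le (n : ℕ) : convQ x (n + 2) + convQ x (n + 3) ≤ convQ x (n + 4) := by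
  have ha := one_le_floor_cfX_succ hx (n + 1)
  have hq := one_le_convQ hx (n + 1)
  change _ ≤ ⌊cfX x (n + 2)⌋ * convQ x (n + 3) + convQ x (n + 2)
  nlinarith

lemma abs_convQ_mul_sub_convP_le (n : ℕ) :
    |convQ x (n + 2) * x - convP x (n + 2)| ≤ (convQ x (n + 3) : ℝ)⁻¹ := by
  have h := abs_sub_convs_le (of_not_terminatedAt_of_irrational hx n)
  rw [conv_eq_num_div_den, of_nums_eq_convP hx, of_dens_eq_convQ hx, of_dens_eq_convQ hx] at h
  have hQ : (0 : ℝ) < convQ x (n + 2) := by exact_mod_cast one_le_convQ hx n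
  calc |convQ x (n + 2) * x - convP x (n + 2)|
      = convQ x (n + 2) * |x - convP x (n + 2) / convQ x (n + 2)| := by
        rw [← abs_of_pos hQ, ← abs_mul, abs_of_pos hQ, mul_sub, mul_div_cancel₀ _ hQ.ne']
    _ ≤ convQ x (n + 2) * (1 / (convQ x (n + 2) * convQ x (n + 3))) := by gcongr
    _ = (convQ x (n + 3) : ℝ)⁻¹ := by field_simp

lemma isCoprime_convP_convQ (n : ℕ) : IsCoprime (convP x (n + 2)) (convQ x (n + 2)) := by
  have h : (GenContFract.of x).nums n * (GenContFract.of x).dens (n + 1) -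
      (GenContFract.of x).dens n * (GenContFract.of x).nums (n + 1) = (-1) ^ (n + 1) :=
    SimpContFract.determinant (s := SimpContFract.of x) (of_not_terminatedAt_of_irrational hx n)
  rw [of_nums_eq_convP hx, of_nums_eq_convP hx, of_dens_eq_convQ hx, of_dens_eq_convQ hx] at h
  have hZ : convP x (n + 2) * convQ x (n + 3) - convQ x (n + 2) * convP x (n + 3) =
      (-1) ^ (n + 1) := by exact_mod_cast h
  have hu : ((-1 : ℤ) ^ (n + 1)) * (-1) ^ (n + 1) = 1 := by rw [← mul_pow]; norm_num
  exact ⟨(-1) ^ (n + 1) * convQ x (n + 3), -(-1) ^ (n + 1) * convP x (n + 3), by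
    linear_combination (-1 : ℤ) ^ (n + 1) * hZ + hu⟩

end Convergents

lemma distZ_pos {y : ℝ} (hy : Irrational y) : 0 < distZ y :=
  abs_pos.2 (sub_ne_zero.2 (hy.ne_int _))

lemma one_div_two_mul_convQ_le_abs_sub {x : ℝ} (hx : Irrational x) {n q : ℕ} (p : ℤ)
    (hq : 0 < q) (hqQ : (q : ℤ) < convQ x (n + 2)) (hqQ' : 2 * (q : ℤ) ≤ convQ x (n + 3)) :
    1 / (2 * convQ x (n + 2)) ≤ |q * x - p| := by
  set Q := convQ x (n + 2)
  set P := convP x (n + 2)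
  have hQ : (0 : ℝ) < Q := by exact_mod_cast one_le_convQ hx n
  have hQ' : (0 : ℝ) < convQ x (n + 3) := by exact_mod_cast one_le_convQ hx (n + 1)
  have hne : (q : ℤ) * P - p * Q ≠ 0 := by
    intro h
    have hdvd : Q ∣ q := (isCoprime_convP_convQ hx n).symm.dvd_of_dvd_mul_right ⟨p, by linarith⟩
    exact (Int.le_of_dvd (by exact_mod_cast hq) hdvd).not_gt hqQ
  have h_one : (1 : ℝ) ≤ |(q : ℝ) * P - p * Q| := by exact_mod_cast Int.one_le_abs hne
  have h_half : (q : ℝ) * |Q * x - P| ≤ 1 / 2 := by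
    calc (q : ℝ) * |Q * x - P| ≤ q * (convQ x (n + 3) : ℝ)⁻¹ := by
          gcongr; exact abs_convQ_mul_sub_convP_le hx n
      _ ≤ 1 / 2 := by
          rw [← div_eq_mul_inv, div_le_iff₀ hQ']
          linarith [show (2 * q : ℝ) ≤ convQ x (n + 3) by exact_mod_cast hqQ']
  have h_tri : |(q : ℝ) * P - p * Q| ≤ Q * |q * x - p| + q * |Q * x - P| := by
    calc |(q : ℝ) * P - p * Q| = |Q * (q * x - p) - q * (Q * x - P)| := by ring_nf
      _ ≤ |Q * (q * x - p)| + |q * (Q * x - P)| := abs_sub _ _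
      _ = Q * |q * x - p| + q * |Q * x - P| := by
        rw [abs_mul, abs_mul, abs_of_pos hQ, Nat.abs_cast]
  rw [div_le_iff₀ (by positivity)]
  nlinarith

lemma one_div_four_mul_convQ_le_distZ {x : ℝ} (hx : Irrational x) {k q : ℕ} (hq : 0 < q)
    (hqQ : (q : ℤ) < convQ x (k + 3)) :
    1 / (4 * convQ x (k + 3)) ≤ distZ (q * x) := by
  have hQ : (0 : ℝ) < convQ x (k + 3) := by exact_mod_cast one_le_convQ hx (k + 1)
  rcases le_or_gt (2 * (q : ℤ)) (convQ x (k + 4)) with h | h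
  · calc 1 / (4 * (convQ x (k + 3) : ℝ)) ≤ 1 / (2 * convQ x (k + 3)) := by gcongr; norm_num
      _ ≤ distZ (q * x) := one_div_two_mul_convQ_le_abs_sub hx _ hq hqQ h
  · -- Then `q_{k+2} < 2 q` and `q_{k+3} ≥ q_{k+2} + q_{k+1} > 2 q`: use the next convergent.
    have hmono : convQ x (k + 3) ≤ convQ x (k + 4) := monotone_convQ hx (Nat.le_succ (k + 1))
    have hsum : convQ x (k + 3) + convQ x (k + 4) ≤ convQ x (k + 5) :=
      convQ_add_convQ_le hx (k + 1)
    have h' : ((convQ x (k + 4) : ℤ) : ℝ) < 2 * q := by exact_mod_cast h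
    have hqR : (q : ℝ) < convQ x (k + 3) := by exact_mod_cast hqQ
    have hQ4 : (0 : ℝ) < convQ x (k + 4) := by exact_mod_cast one_le_convQ hx (k + 2)
    have hq4 : (q : ℤ) < convQ x (k + 4) := by omega
    have hq5 : 2 * (q : ℤ) ≤ convQ x (k + 5) := by omega
    calc 1 / (4 * (convQ x (k + 3) : ℝ)) ≤ 1 / (2 * convQ x (k + 4)) :=
          one_div_le_one_div_of_le (by positivity) (by linarith)
      _ ≤ distZ (q * x) := one_div_two_mul_convQ_le_abs_sub hx _ hq hq4 hq5

lemma log_convQ_div_le_log_inv_distZ_div {x : ℝ} (hx : Irrational x) {n q : ℕ}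
    (hq : (q : ℤ) = convQ x (n + 2)) :
    Real.log (convQ x (n + 3)) / convQ x (n + 2) ≤ Real.log (distZ (q * x))⁻¹ / q := by
  have hqR : (q : ℝ) = convQ x (n + 2) := by exact_mod_cast hq
  have hq0 : 0 < q := by have := one_le_convQ hx n; omega
  have hd := distZ_pos (hx.natCast_mul hq0.ne')
  have hdist : distZ (q * x) ≤ (convQ x (n + 3) : ℝ)⁻¹ :=
    (round_le _ _).trans (hqR ▸ abs_convQ_mul_sub_convP_le hx n)
  have hQ' : (0 : ℝ) < convQ x (n + 3) := by exact_mod_cast one_le_convQ hx (n + 1)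
  rw [← hqR]
  exact div_le_div_of_nonneg_right (Real.log_le_log hQ' (le_inv_of_le_inv₀ hd hdist))
    (Nat.cast_nonneg q)

lemma log_inv_distZ_div_le {x : ℝ} (hx : Irrational x) {k q : ℕ}
    (hkq : convQ x (k + 2) ≤ q) (hqk : (q : ℤ) < convQ x (k + 3)) :
    Real.log (distZ (q * x))⁻¹ / q ≤
      Real.log (convQ x (k + 3)) / convQ x (k + 2) + Real.log 4 / convQ x (k + 2) := by
  have hQ : (0 : ℝ) < convQ x (k + 2) := by exact_mod_cast one_le_convQ hx k
  have hQ' : (1 : ℝ) ≤ convQ x (k + 3) := by exact_mod_cast one_le_convQ hx (k + 1)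
  have hkqR : (convQ x (k + 2) : ℝ) ≤ q := by exact_mod_cast hkq
  have hd := one_div_four_mul_convQ_le_distZ hx (by exact_mod_cast hQ.trans_le hkqR) hqk
  calc Real.log (distZ (q * x))⁻¹ / q ≤ Real.log (4 * convQ x (k + 3)) / q := by
        refine div_le_div_of_nonneg_right
          (Real.log_le_log (inv_pos.2 (lt_of_lt_of_le (by positivity) hd)) ?_) (Nat.cast_nonneg q)
        exact inv_le_of_inv_le₀ (by positivity) (by simpa using hd)
    _ ≤ Real.log (4 * convQ x (k + 3)) / convQ x (k + 2) := by
        gcongr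
        exact Real.log_nonneg (by linarith)
    _ = _ := by rw [Real.log_mul (by norm_num) (by positivity), add_div, add_comm]

lemma limsup_le_limsup_of_forall_Ico {α : Type*} [CompleteLinearOrder α] [DenselyOrdered α]
    {f g : ℕ → α} {Q : ℕ → ℤ} (hQ : Monotone Q) (hQ_top : Tendsto Q atTop atTop)
    (h : ∀ k (q : ℕ), Q k ≤ q → (q : ℤ) < Q (k + 1) → f q ≤ g k) :
    limsup f atTop ≤ limsup g atTop := by
  refine le_of_forall_gt_imp_ge_of_dense fun b hb => ?_
  obtain ⟨K, hK⟩ := eventually_atTop.1 (eventually_lt_of_limsup_lt hb)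
  refine limsup_le_of_le (by isBoundedDefault) (eventually_atTop.2 ⟨(Q K).toNat, fun q hq => ?_⟩)
  have hQKq : Q K ≤ q := by omega
  have hex : ∃ m, (q : ℤ) < Q m := (hQ_top.eventually_gt_atTop (q : ℤ)).exists
  have hKm : K < Nat.find hex := by
    by_contra! hle
    exact (Nat.find_spec hex).not_ge ((hQ hle).trans hQKq)
  obtain ⟨k, hk⟩ : ∃ k, Nat.find hex = k + 1 := Nat.exists_eq_add_one_of_ne_zero (by omega)
  have hkq : Q k ≤ q := not_lt.1 (Nat.find_min hex (by omega))
  exact (h k q hkq (hk ▸ Nat.find_spec hex)).trans (hK k (by omega)).le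

/-- For irrational `x`, `limsup_n (log q_{n+1})/q_n` equals
`limsup_{q→∞} log(1/dist(qx,ℤ))/q`. -/
theorem stmt5 (x : ℝ) (hx : Irrational x) :
    Filter.limsup
      (fun n : ℕ => ENNReal.ofReal (Real.log (convQ x (n + 3) : ℝ) / (convQ x (n + 2) : ℝ)))
      Filter.atTop = Bsup x := by
  set G := fun n : ℕ => ENNReal.ofReal (Real.log (convQ x (n + 3) : ℝ) / (convQ x (n + 2) : ℝ))
  set F := fun q : ℕ => ENNReal.ofReal (Real.log (distZ ((q : ℝ) * x))⁻¹ / (q : ℝ))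
  set E := fun n : ℕ => ENNReal.ofReal (Real.log 4 / (convQ x (n + 2) : ℝ))
  set σ := fun n => (convQ x (n + 2)).toNat
  have hσ (n : ℕ) : (σ n : ℤ) = convQ x (n + 2) :=
    Int.toNat_of_nonneg (by linarith [one_le_convQ hx n])
  have hσ_top : Tendsto σ atTop atTop :=
    tendsto_natCast_atTop_iff.1 ((tendsto_convQ hx).congr fun n => (hσ n).symm)
  have hE : Tendsto E atTop (nhds 0) := by
    simpa using ENNReal.tendsto_ofReal ((tendsto_const_nhds (x := Real.log 4)).div_atTop
      (tendsto_intCast_atTop_atTop.comp (tendsto_convQ hx)))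
  change limsup G atTop = limsup F atTop
  apply le_antisymm
  · calc limsup G atTop ≤ limsup (F ∘ σ) atTop := limsup_le_limsup (Eventually.of_forall fun n =>
          ENNReal.ofReal_le_ofReal (log_convQ_div_le_log_inv_distZ_div hx (hσ n)))
      _ ≤ limsup F atTop := hσ_top.limsup_comp_le_limsup
  · calc limsup F atTop ≤ limsup (G + E) atTop :=
          limsup_le_limsup_of_forall_Ico (monotone_convQ hx) (tendsto_convQ hx)
            fun k q hkq hqk => (ENNReal.ofReal_le_ofReal (log_inv_distZ_div_le hx hkq hqk)).trans
              ENNReal.ofReal_add_le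
      _ = limsup G atTop := ENNReal.limsup_add_of_right_tendsto_zero hE G
end

section
/- For an irrational real number x and any matrix (a b; c d) in GL(2,ℤ) with cx + d ≠ 0, one has B_sup((ax+b)/(cx+d)) = B_sup(x)/|cx+d|, where B_sup denotes the exponential type (limsup of log(1/dist(qx,ℤ))/q over positive integers q), valued in [0,+∞]. -/
open Filter
open scoped ENNReal

/-!
If `p/q` is a good rational approximation of `x`, then `(ap + bq)/(cp + dq)` approximates
`y = (ax + b)/(cx + d)`: with `Q = |cp + dq|` one has `dist(Qy, ℤ) ≤ |qx - p| / |cx + d|`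
because the determinant is `±1`, while `Q = q|cx + d| + O(1)`. Hence every `q` with
`log(1/dist(qx, ℤ))/q ≥ s` yields a `Q` with `log(1/dist(Qy, ℤ))/Q ≥ s/|cx + d| - o(1)`, giving
`B_sup(x) ≤ B_sup(y) |cx + d|`; the inverse matrix gives the reverse inequality.
-/

open Topology

lemma tendsto_atTop_of_tendsto_div_natCast {Q : ℕ → ℕ} {r : ℝ} (hr : 0 < r)
    (hQ : Tendsto (fun q : ℕ => (Q q : ℝ) / q) atTop (𝓝 r)) : Tendsto Q atTop atTop := by
  rw [← tendsto_natCast_atTop_iff (R := ℝ)]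
  refine (hQ.pos_mul_atTop hr tendsto_natCast_atTop_atTop).congr' ?_
  filter_upwards [eventually_ne_atTop 0] with q hq
  field_simp

lemma tendsto_div_natCast_of_abs_sub_mul_le {u : ℕ → ℝ} {r C : ℝ}
    (hu : ∀ q : ℕ, |u q - q * r| ≤ C) : Tendsto (fun q : ℕ => u q / q) atTop (𝓝 r) := by
  rw [tendsto_iff_norm_sub_tendsto_zero]
  refine squeeze_zero' (Eventually.of_forall fun _ => norm_nonneg _) ?_
    (tendsto_const_div_atTop_nhds_zero_nat C)
  filter_upwards [eventually_ne_atTop 0] with q hq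
  have hq' : (0 : ℝ) < q := by positivity
  rw [Real.norm_eq_abs, div_sub' hq'.ne', abs_div, abs_of_pos hq']
  gcongr
  exact hu q

lemma limsup_ofReal_div_le_of_reindex {f g : ℕ → ℝ} {Q : ℕ → ℕ} {r K : ℝ} (hr : 0 < r)
    (hQ : Tendsto (fun q : ℕ => (Q q : ℝ) / q) atTop (𝓝 r))
    (hfg : ∀ᶠ q in atTop, f q + K ≤ g (Q q)) :
    limsup (fun q : ℕ => ENNReal.ofReal (f q / q)) atTop ≤
      limsup (fun n : ℕ => ENNReal.ofReal (g n / n)) atTop * ENNReal.ofReal r := by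
  set A := fun n : ℕ => ENNReal.ofReal (g n / n)
  set B := fun q : ℕ => ENNReal.ofReal ((Q q : ℝ) / q)
  set E := fun q : ℕ => ENNReal.ofReal (-K / q)
  have hB : Tendsto B atTop (𝓝 (ENNReal.ofReal r)) := ENNReal.tendsto_ofReal hQ
  have hE : Tendsto E atTop (𝓝 0) := by
    simpa [E] using ENNReal.tendsto_ofReal (tendsto_const_div_atTop_nhds_zero_nat (-K))
  have hpointwise : ∀ᶠ q in atTop, ENNReal.ofReal (f q / q) ≤ ((A ∘ Q) * B + E) q := by
    filter_upwards [hfg, eventually_ne_atTop 0,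
      (tendsto_atTop_of_tendsto_div_natCast hr hQ).eventually_ne_atTop 0] with q hq hq0 hQ0
    have hsplit : (g (Q q) - K) / q = g (Q q) / Q q * (Q q / q) + -K / q := by
      field_simp; ring
    calc ENNReal.ofReal (f q / q) ≤ ENNReal.ofReal ((g (Q q) - K) / q) := by
          gcongr; linarith
      _ ≤ ((A ∘ Q) * B + E) q := by
          rw [hsplit]
          refine ENNReal.ofReal_add_le.trans_eq ?_
          rw [ENNReal.ofReal_mul' (by positivity)]
          rfl
  have hBlim : limsup B atTop = ENNReal.ofReal r := hB.limsup_eq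
  calc limsup (fun q : ℕ => ENNReal.ofReal (f q / q)) atTop
      ≤ limsup ((A ∘ Q) * B + E) atTop := limsup_le_limsup hpointwise
    _ = limsup ((A ∘ Q) * B) atTop := ENNReal.limsup_add_of_right_tendsto_zero hE _
    _ ≤ limsup (A ∘ Q) atTop * limsup B atTop := ENNReal.limsup_mul_le'
          (Or.inr (by simp [hBlim])) (Or.inr (by simp [hBlim, hr]))
    _ ≤ limsup A atTop * ENNReal.ofReal r := by
          rw [hBlim]
          gcongr
          exact (tendsto_atTop_of_tendsto_div_natCast hr hQ).limsup_comp_le_limsup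

section Moebius

variable {K : Type*} [Field K] {x a b c d : K}

lemma mul_moebius_sub (hcd : c * x + d ≠ 0) (p q : K) :
    (c * p + d * q) * ((a * x + b) / (c * x + d)) - (a * p + b * q) =
      (a * d - b * c) * (q * x - p) / (c * x + d) := by
  field_simp
  ring

lemma neg_mul_moebius_add (hcd : c * x + d ≠ 0) :
    -c * ((a * x + b) / (c * x + d)) + a = (a * d - b * c) / (c * x + d) := by
  field_simp
  ring

lemma moebius_inv_moebius (hcd : c * x + d ≠ 0) (hdet : a * d - b * c ≠ 0) :
    (d * ((a * x + b) / (c * x + d)) + -b) / (-c * ((a * x + b) / (c * x + d)) + a) = x := by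
  have hnum : d * ((a * x + b) / (c * x + d)) + -b = (a * d - b * c) * x / (c * x + d) := by
    rw [mul_div_assoc', div_add' _ _ _ hcd]
    ring
  rw [hnum, neg_mul_moebius_add hcd, div_div_div_cancel_right₀ hcd, mul_div_cancel_left₀ _ hdet]

end Moebius

lemma irrational_moebius {x : ℝ} (hx : Irrational x) {a b c d : ℤ} (hdet : a * d - b * c ≠ 0)
    (hcd : (c : ℝ) * x + d ≠ 0) : Irrational ((a * x + b) / (c * x + d)) := by
  rintro ⟨t, ht⟩
  refine hx ⟨(d * t + -b) / (-c * t + a), ?_⟩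
  have hdet' : (a * d - b * c : ℝ) ≠ 0 := by exact_mod_cast hdet
  rw [← moebius_inv_moebius hcd hdet', ← ht]
  push_cast
  rfl

lemma distZ_le_abs_sub_intCast (z : ℝ) (k : ℤ) : distZ z ≤ |z - k| := round_le z k

lemma distZ_pos_s9 {z : ℝ} (hz : Irrational z) : 0 < distZ z :=
  abs_pos.2 (sub_ne_zero.2 (hz.ne_int _))

lemma distZ_natAbs_mul_le (m n : ℤ) (y : ℝ) : distZ (m.natAbs * y) ≤ |m * y - n| := by
  rcases Int.natAbs_eq m with h | h
  · nth_rw 2 [h]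
    simpa using distZ_le_abs_sub_intCast (m.natAbs * y) n
  · nth_rw 2 [h]
    rw [← abs_neg]
    simpa [sub_eq_add_neg, neg_add, add_comm] using distZ_le_abs_sub_intCast (m.natAbs * y) (-n)

lemma log_inv_add_log_le_log_inv {s t r : ℝ} (hs : 0 < s) (ht : 0 < t) (hr : 0 < r)
    (h : t * r ≤ s) : Real.log s⁻¹ + Real.log r ≤ Real.log t⁻¹ := by
  rw [← Real.log_mul (by positivity) hr.ne']
  refine Real.log_le_log (by positivity) ?_
  rw [inv_mul_le_iff₀ hs, ← div_eq_mul_inv, le_div_iff₀ ht]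
  linarith

lemma Bsup_le_Bsup_moebius_mul {x : ℝ} (hx : Irrational x) {a b c d : ℤ}
    (hdet : |a * d - b * c| = 1) (hcd : (c : ℝ) * x + d ≠ 0) :
    Bsup x ≤ Bsup ((a * x + b) / (c * x + d)) * ENNReal.ofReal |c * x + d| := by
  set y := ((a : ℝ) * x + b) / (c * x + d)
  set r := |(c : ℝ) * x + d|
  have hr : 0 < r := abs_pos.2 hcd
  have hy : Irrational y := irrational_moebius hx (by rintro h; simp [h] at hdet) hcd
  set m : ℕ → ℤ := fun q => c * round (q * x) + d * q
  have hm : ∀ q : ℕ, |((m q).natAbs : ℝ) - q * r| ≤ |(c : ℝ)| / 2 := by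
    intro q
    have hround : |(round ((q : ℝ) * x) : ℝ) - q * x| ≤ 1 / 2 := by
      rw [abs_sub_comm]; exact abs_sub_round _
    calc |((m q).natAbs : ℝ) - q * r| = |(|(m q : ℝ)| - |q * ((c : ℝ) * x + d)|)| := by
          rw [abs_mul, Nat.abs_cast, Nat.cast_natAbs, Int.cast_abs]
      _ ≤ |(m q : ℝ) - q * ((c : ℝ) * x + d)| := abs_abs_sub_abs_le_abs_sub _ _
      _ = |(c : ℝ)| * |(round ((q : ℝ) * x) : ℝ) - q * x| := by
          rw [← abs_mul]; congr 1; push_cast [m]; ring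
      _ ≤ |(c : ℝ)| * (1 / 2) := by gcongr
      _ = |(c : ℝ)| / 2 := by ring
  have hdist : ∀ q : ℕ, distZ ((m q).natAbs * y) * r ≤ distZ (q * x) := by
    intro q
    have hdetR : |(a : ℝ) * d - b * c| = 1 := by exact_mod_cast hdet
    have := distZ_natAbs_mul_le (m q) (a * round ((q : ℝ) * x) + b * q) y
    rw [← le_div_iff₀ hr]
    refine this.trans_eq ?_
    push_cast [m]
    rw [mul_moebius_sub hcd, abs_div, abs_mul, hdetR, one_mul]
    rfl
  have hQ := tendsto_div_natCast_of_abs_sub_mul_le hm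
  refine limsup_ofReal_div_le_of_reindex hr hQ (K := Real.log r) ?_
  filter_upwards [eventually_ne_atTop 0,
    (tendsto_atTop_of_tendsto_div_natCast hr hQ).eventually_ne_atTop 0] with q hq hQq
  exact log_inv_add_log_le_log_inv (distZ_pos_s9 (hx.natCast_mul hq))
    (distZ_pos_s9 (hy.natCast_mul hQq)) hr (hdist q)

/-- For irrational `x` and a matrix `(a b; c d) ∈ GL(2,ℤ)` (integer entries, determinant
`±1`) with `cx + d ≠ 0`, one has `B_sup((ax+b)/(cx+d)) = B_sup(x)/|cx+d|`. -/
theorem stmt9 (x : ℝ) (hx : Irrational x) (a b c d : ℤ)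
    (hdet : a * d - b * c = 1 ∨ a * d - b * c = -1)
    (hcd : (c : ℝ) * x + (d : ℝ) ≠ 0) :
    Bsup (((a : ℝ) * x + (b : ℝ)) / ((c : ℝ) * x + (d : ℝ)))
      = Bsup x / ENNReal.ofReal |(c : ℝ) * x + (d : ℝ)| := by
  have hdet₁ : |a * d - b * c| = 1 := (abs_eq zero_le_one).2 hdet
  have hdetR : |(a : ℝ) * d - b * c| = 1 := by exact_mod_cast hdet₁
  have hdetR₀ : (a : ℝ) * d - b * c ≠ 0 := by rw [← abs_ne_zero, hdetR]; exact one_ne_zero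
  have hr : 0 < |(c : ℝ) * x + d| := abs_pos.2 hcd
  have hdet_inv : |d * a - (-b) * (-c)| = 1 := by rw [← hdet₁]; ring_nf
  have hyx := Bsup_le_Bsup_moebius_mul (irrational_moebius hx (by exact_mod_cast hdetR₀) hcd)
    hdet_inv (by push_cast; rw [neg_mul_moebius_add hcd]; exact div_ne_zero hdetR₀ hcd)
  push_cast at hyx
  rw [moebius_inv_moebius hcd hdetR₀, neg_mul_moebius_add hcd, abs_div, hdetR, one_div,
    ENNReal.ofReal_inv_of_pos hr, ← div_eq_mul_inv] at hyx
  refine le_antisymm hyx ?_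
  rw [ENNReal.div_le_iff_le_mul (Or.inl (ENNReal.ofReal_pos.2 hr).ne')
    (Or.inl ENNReal.ofReal_ne_top)]
  exact Bsup_le_Bsup_moebius_mul hx hdet₁ hcd
end

section
/- Let x be an irrational real number and define C_sup(x) = limsup over L → ∞ of (1/L) Σ_{l=1}^{L} (−log{lx} − log{−lx}), where {·} is fractional part. Then B_sup(x) ≤ C_sup(x), where B_sup(x) is the exponential type of x (limsup over q of log(1/dist(qx,ℤ))/q). -/
open Filter
open scoped ENNReal

/-- `C_sup(x) = limsup_{L→∞} (1/L) Σ_{l=1}^L (-log{lx} - log{-lx})`, valued in `[0,∞]`. -/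
noncomputable def Csup (x : ℝ) : ℝ≥0∞ :=
  Filter.limsup (fun L : ℕ => ENNReal.ofReal ((1 / (L : ℝ)) *
    ∑ l ∈ Finset.Icc 1 L,
      (-Real.log (Int.fract ((l : ℝ) * x)) - Real.log (Int.fract (-((l : ℝ) * x))))))
    Filter.atTop

/-!
The `q`-th term of `B_sup(x)` is bounded by the `q`-th term of `C_sup(x)`. Indeed
`dist(y, ℤ) = min({y}, 1 - {y}) ≥ {y}(1 - {y}) = {y}{-y}`, so
`log (1 / dist(qx, ℤ)) ≤ -log{qx} - log{-qx}`, and this is one of the nonnegative summands of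
`Σ_{l=1}^q (-log{lx} - log{-lx})`.
-/

lemma fract_mul_fract_neg_le_distZ (y : ℝ) : Int.fract y * Int.fract (-y) ≤ distZ y := by
  have hdist : 0 ≤ distZ y := abs_nonneg _
  by_cases hy : Int.fract y = 0
  · simpa [hy] using hdist
  have h0 := Int.fract_nonneg y
  have h1 := Int.fract_lt_one y
  rw [distZ, abs_sub_round_eq_min, Int.fract_neg hy]
  rcases le_total (Int.fract y) (1 - Int.fract y) with h | h
  · rw [min_eq_left h]; nlinarith
  · rw [min_eq_right h]; nlinarith

lemma log_inv_distZ_le (y : ℝ) :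
    Real.log (distZ y)⁻¹ ≤ -Real.log (Int.fract y) - Real.log (Int.fract (-y)) := by
  by_cases hy : Int.fract y = 0
  · have hdist : distZ y = 0 := by simp [distZ, abs_sub_round_eq_min, hy]
    simp [hy, Int.fract_neg_eq_zero.mpr hy, hdist]
  have hpos : 0 < Int.fract y := (Int.fract_nonneg y).lt_of_ne' hy
  have hpos' : 0 < Int.fract (-y) := by
    rw [Int.fract_neg hy]; linarith [Int.fract_lt_one y]
  have hlog := Real.log_le_log (mul_pos hpos hpos') (fract_mul_fract_neg_le_distZ y)
  rw [Real.log_mul hpos.ne' hpos'.ne'] at hlog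
  rw [Real.log_inv]
  linarith

lemma neg_log_fract_sub_log_fract_neg_nonneg (y : ℝ) :
    0 ≤ -Real.log (Int.fract y) - Real.log (Int.fract (-y)) := by
  have h := Real.log_nonpos (Int.fract_nonneg y) (Int.fract_lt_one y).le
  have h' := Real.log_nonpos (Int.fract_nonneg (-y)) (Int.fract_lt_one (-y)).le
  linarith

theorem stmt10_general (x : ℝ) : Bsup x ≤ Csup x := by
  refine limsup_le_limsup (Eventually.of_forall fun q => ?_) isCobounded_le_of_bot
    isBounded_le_of_top
  apply ENNReal.ofReal_le_ofReal
  rw [one_div_mul_eq_div]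
  refine div_le_div_of_nonneg_right ?_ q.cast_nonneg
  rcases Nat.eq_zero_or_pos q with rfl | hq
  · simp [distZ]
  calc Real.log (distZ ((q : ℝ) * x))⁻¹
      ≤ -Real.log (Int.fract ((q : ℝ) * x)) - Real.log (Int.fract (-((q : ℝ) * x))) :=
        log_inv_distZ_le _
    _ ≤ ∑ l ∈ Finset.Icc 1 q,
          (-Real.log (Int.fract ((l : ℝ) * x)) - Real.log (Int.fract (-((l : ℝ) * x)))) :=
        Finset.single_le_sum (f := fun l : ℕ => -Real.log (Int.fract ((l : ℝ) * x)) -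
            Real.log (Int.fract (-((l : ℝ) * x))))
          (fun l _ => neg_log_fract_sub_log_fract_neg_nonneg _) (Finset.mem_Icc.mpr ⟨hq, le_rfl⟩)

/-- For irrational `x`, `B_sup(x) ≤ C_sup(x)`. -/
theorem stmt10 (x : ℝ) (hx : Irrational x) : Bsup x ≤ Csup x :=
  stmt10_general x
end

section
/- Let λ be a partition (a nonincreasing sequence λ_1 ≥ λ_2 ≥ ... of nonnegative integers with finite sum |λ|), with conjugate partition λ'. For a box (i,j) of λ (meaning 1 ≤ j ≤ λ_i), define σ_{ij} = λ'_j − i + λ_i − j. Then for any integer s, the number of boxes (i,j) ∈ λ with σ_{ij} = s is at most √(2|λ|). -/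
/-!
The function `σ` is strictly decreasing in both coordinates, so the boxes with `σ = s` form an
antichain `B` of `ℕ × ℕ` inside the Young diagram. Two boxes of an antichain with rows `i ≤ i'`
have columns `j ≥ j'`, so `(i, j')` is again a box of the diagram, and it determines both boxes.
Hence the ordered pairs of `B` with nondecreasing rows, at least half of `B × B`, inject into the
diagram: `|B|² ≤ 2 |λ|`.
-/

/-- The conjugate partition `λ'`, 0-indexed: `conjP lam j` is the length of column `j`. -/
noncomputable def conjP (lam : ℕ → ℕ) (j : ℕ) : ℕ := Set.ncard {i : ℕ | j < lam i}

open Finset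

section Antichain

variable {α β : Type*} [LinearOrder α] [LinearOrder β] {s : Set (α × β)}

theorem IsAntichain.injOn_fst (hs : IsAntichain (· ≤ ·) s) : Set.InjOn Prod.fst s := by
  intro p hp q hq h
  rcases le_total p.2 q.2 with h2 | h2
  · exact hs.eq hp hq ⟨h.le, h2⟩
  · exact (hs.eq hq hp ⟨h.ge, h2⟩).symm

theorem IsAntichain.injOn_snd (hs : IsAntichain (· ≤ ·) s) : Set.InjOn Prod.snd s := by
  intro p hp q hq h
  rcases le_total p.1 q.1 with h1 | h1
  · exact hs.eq hp hq ⟨h1, h.le⟩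
  · exact (hs.eq hq hp ⟨h1, h.ge⟩).symm

theorem IsAntichain.snd_le_of_fst_le (hs : IsAntichain (· ≤ ·) s) {p q : α × β}
    (hp : p ∈ s) (hq : q ∈ s) (h : p.1 ≤ q.1) : q.2 ≤ p.2 := by
  by_contra! h2
  rw [hs.eq hp hq ⟨h, h2.le⟩] at h2
  exact lt_irrefl _ h2

end Antichain

theorem card_sq_le_two_mul_card_filter_le {γ δ : Type*} [LinearOrder δ] (s : Finset γ)
    (f : γ → δ) : #s ^ 2 ≤ 2 * #{pq ∈ s ×ˢ s | f pq.1 ≤ f pq.2} := by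
  classical
  set T := {pq ∈ s ×ˢ s | f pq.1 ≤ f pq.2}
  have hcover : s ×ˢ s ⊆ T ∪ T.image Prod.swap := by
    intro pq hpq
    rcases le_total (f pq.1) (f pq.2) with h | h
    · exact mem_union_left _ (mem_filter.2 ⟨hpq, h⟩)
    · refine mem_union_right _ (mem_image.2 ⟨pq.swap, mem_filter.2 ⟨?_, h⟩, rfl⟩)
      exact mem_product.2 (mem_product.1 hpq).symm
  calc #s ^ 2 = #(s ×ˢ s) := by rw [card_product, sq]
    _ ≤ #(T ∪ T.image Prod.swap) := card_le_card hcover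
    _ ≤ #T + #(T.image Prod.swap) := card_union_le _ _
    _ ≤ 2 * #T := by linarith [card_image_le (s := T) (f := Prod.swap)]

theorem IsAntichain.card_sq_le_two_mul_card {α β : Type*} [LinearOrder α] [LinearOrder β]
    {s t : Finset (α × β)} (hs : IsAntichain (· ≤ ·) (s : Set (α × β)))
    (ht : IsLowerSet (t : Set (α × β))) (hst : s ⊆ t) : #s ^ 2 ≤ 2 * #t := by
  refine (card_sq_le_two_mul_card_filter_le s Prod.fst).trans (Nat.mul_le_mul_left 2 ?_)
  refine card_le_card_of_injOn (fun pq => (pq.1.1, pq.2.2)) ?_ ?_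
  · intro pq hpq
    obtain ⟨hpq, hle⟩ := mem_filter.1 hpq
    obtain ⟨hp, hq⟩ := mem_product.1 hpq
    have hle' : (pq.1.1, pq.2.2) ≤ pq.1 := ⟨le_rfl, hs.snd_le_of_fst_le (q := pq.2) hp hq hle⟩
    exact ht hle' (mem_coe.2 (hst hp))
  · intro pq hpq pq' hpq' h
    obtain ⟨hp, hq⟩ := mem_product.1 (mem_filter.1 hpq).1
    obtain ⟨hp', hq'⟩ := mem_product.1 (mem_filter.1 hpq').1
    obtain ⟨h1, h2⟩ := Prod.mk.inj h
    exact Prod.ext (hs.injOn_fst hp hp' h1) (hs.injOn_snd hq hq' h2)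

section Partition

variable {lam : ℕ → ℕ} {N : ℕ}

def youngDiagram (lam : ℕ → ℕ) (N : ℕ) : Finset (ℕ × ℕ) :=
  {p ∈ range N ×ˢ range (lam 0) | p.2 < lam p.1}

/-- `σ_{ij}` in 0-indexed coordinates: the box `(i, j)` here is the box `(i + 1, j + 1)` of the
paper. -/
noncomputable def boxSigma (lam : ℕ → ℕ) (p : ℕ × ℕ) : ℤ :=
  (conjP lam p.2 : ℤ) - (p.1 + 1) + (lam p.1 : ℤ) - (p.2 + 1)

theorem lt_of_pos_of_forall_ge_eq_zero (hN : ∀ n, N ≤ n → lam n = 0) {i : ℕ} (h : 0 < lam i) :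
    i < N := by
  by_contra! hi
  exact h.ne' (hN i hi)

theorem mem_youngDiagram (hanti : Antitone lam) (hN : ∀ n, N ≤ n → lam n = 0) {p : ℕ × ℕ} :
    p ∈ youngDiagram lam N ↔ p.2 < lam p.1 := by
  simp only [youngDiagram, mem_filter, mem_product, mem_range, and_iff_right_iff_imp]
  exact fun h => ⟨lt_of_pos_of_forall_ge_eq_zero hN (p.2.zero_le.trans_lt h),
    h.trans_le (hanti p.1.zero_le)⟩

theorem card_youngDiagram (hanti : Antitone lam) :
    #(youngDiagram lam N) = ∑ i ∈ range N, lam i := by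
  rw [youngDiagram, card_filter, sum_product]
  refine sum_congr rfl fun i _ => ?_
  dsimp only
  rw [← card_filter, ← Nat.Iio_eq_range, Iio_filter_lt, min_eq_right (hanti i.zero_le),
    Nat.card_Iio]

theorem isLowerSet_youngDiagram (hanti : Antitone lam) (hN : ∀ n, N ≤ n → lam n = 0) :
    IsLowerSet (youngDiagram lam N : Set (ℕ × ℕ)) := by
  intro p q hqp hp
  rw [mem_coe, mem_youngDiagram hanti hN] at hp ⊢
  exact (hqp.2.trans_lt hp).trans_le (hanti hqp.1)

theorem conjP_antitone (hN : ∀ n, N ≤ n → lam n = 0) : Antitone (conjP lam) := by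
  intro j j' hjj'
  refine Set.ncard_le_ncard (fun i hi => hjj'.trans_lt hi) ?_
  refine (Set.finite_Iio N).subset fun i hi => ?_
  exact lt_of_pos_of_forall_ge_eq_zero hN (j.zero_le.trans_lt hi)

theorem boxSigma_strictAnti (hanti : Antitone lam) (hN : ∀ n, N ≤ n → lam n = 0) :
    StrictAnti (boxSigma lam) := by
  intro p q hpq
  have hrow : lam q.1 ≤ lam p.1 := hanti hpq.le.1
  have hcol : conjP lam q.2 ≤ conjP lam p.2 := conjP_antitone hN hpq.le.2
  rcases Prod.lt_iff.1 hpq with ⟨h1, h2⟩ | ⟨h1, h2⟩ <;> simp only [boxSigma] <;> omega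

end Partition

/-- For a partition `λ` (given as an antitone, finitely supported function; rows and columns
are 0-indexed, so the box `(i,j)` here is the box `(i+1,j+1)` of the paper), and for
`σ_{ij} = λ'_j - i + λ_i - j` (in 1-indexed notation), the number of boxes of `λ` with
`σ_{ij} = s` is at most `√(2|λ|)` for any integer `s`. -/
theorem stmt12 (lam : ℕ → ℕ) (hanti : Antitone lam)
    (N : ℕ) (hN : ∀ n, N ≤ n → lam n = 0) (s : ℤ) :
    (Set.ncard {p : ℕ × ℕ | p.2 < lam p.1 ∧
        (conjP lam p.2 : ℤ) - (p.1 + 1) + (lam p.1 : ℤ) - (p.2 + 1) = s} : ℝ)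
      ≤ Real.sqrt (2 * ∑ i ∈ Finset.range N, (lam i : ℝ)) := by
  set B := {p ∈ youngDiagram lam N | boxSigma lam p = s}
  have hB : {p : ℕ × ℕ | p.2 < lam p.1 ∧
      (conjP lam p.2 : ℤ) - (p.1 + 1) + (lam p.1 : ℤ) - (p.2 + 1) = s} = B := by
    ext p
    rw [coe_filter, Set.mem_ofPred_eq, Set.mem_ofPred_eq, mem_youngDiagram hanti hN]
    rfl
  have hantichain : IsAntichain (· ≤ ·) (B : Set (ℕ × ℕ)) :=
    .of_monotoneOn_strictAntiOn (f := boxSigma lam)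
      (fun p hp q hq _ => ((mem_filter.1 hp).2.trans (mem_filter.1 hq).2.symm).le)
      ((boxSigma_strictAnti hanti hN).strictAntiOn _)
  have hcard := hantichain.card_sq_le_two_mul_card (isLowerSet_youngDiagram hanti hN)
    (filter_subset _ _)
  rw [card_youngDiagram hanti] at hcard
  rw [hB, Set.ncard_coe_finset, Real.le_sqrt (by positivity) (by positivity)]
  exact_mod_cast hcard
end

section
/- Let ε_1, ε_2 be nonzero complex numbers with b² = ε_1/ε_2 ∉ ℝ. Define D = |ε_2 · Im(b²)/(1 + b²)| (which is positive). Let λ, μ be partitions, (i,j) a box of λ, and set σ = μ'_j − i + λ_i − j. Then |−ε_1(μ'_j − i) + ε_2(λ_i − j)| ≥ D·|σ|. -/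
theorem Complex.abs_im_mul_abs_add_le (c : ℂ) (m n : ℝ) :
    |c.im| * |m + n| ≤ ‖1 + c‖ * ‖n - c * m‖ := by
  have him : ((starRingEnd ℂ) (1 + c) * (n - c * m)).im = -(c.im * (m + n)) := by
    simp only [Complex.mul_im, map_add, map_one, Complex.conj_re, Complex.conj_im, Complex.add_re,
      Complex.add_im, Complex.sub_re, Complex.sub_im, Complex.mul_re, Complex.one_re,
      Complex.one_im, Complex.ofReal_re, Complex.ofReal_im]
    ring
  calc |c.im| * |m + n| = |((starRingEnd ℂ) (1 + c) * (n - c * m)).im| := by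
        rw [him, abs_neg, abs_mul]
    _ ≤ ‖(starRingEnd ℂ) (1 + c) * (n - c * m)‖ := Complex.abs_im_le_norm _
    _ = ‖1 + c‖ * ‖n - c * m‖ := by rw [norm_mul, Complex.norm_conj]

theorem norm_mul_im_div_one_add_mul_abs_add_le (ε₁ ε₂ : ℂ) (h₂ : ε₂ ≠ 0) (m n : ℝ) :
    ‖ε₂ * ((ε₁ / ε₂).im : ℂ) / (1 + ε₁ / ε₂)‖ * |m + n| ≤ ‖-ε₁ * m + ε₂ * n‖ := by
  set c := ε₁ / ε₂
  have hε₁ : ε₁ = ε₂ * c := (mul_div_cancel₀ ε₁ h₂).symm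
  rw [norm_div, norm_mul, Complex.norm_real, Real.norm_eq_abs, hε₁,
    show -(ε₂ * c) * m + ε₂ * n = ε₂ * (n - c * m) by ring, norm_mul]
  rcases (norm_nonneg (1 + c)).eq_or_lt with h | h
  · rw [← h, div_zero, zero_mul]
    positivity
  · rw [div_mul_eq_mul_div, div_le_iff₀ h, mul_assoc, mul_assoc, mul_comm ‖n - c * m‖]
    exact mul_le_mul_of_nonneg_left (Complex.abs_im_mul_abs_add_le c m n) (norm_nonneg ε₂)

theorem norm_mul_im_div_one_add_pos (ε₁ ε₂ : ℂ) (h₂ : ε₂ ≠ 0) (him : (ε₁ / ε₂).im ≠ 0) :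
    0 < ‖ε₂ * ((ε₁ / ε₂).im : ℂ) / (1 + ε₁ / ε₂)‖ := by
  have h1c : 1 + ε₁ / ε₂ ≠ 0 := fun h => him (by simpa using congrArg Complex.im h)
  have : ((ε₁ / ε₂).im : ℂ) ≠ 0 := Complex.ofReal_ne_zero.mpr him
  exact norm_pos_iff.mpr (by positivity)

-- Boxes are 0-indexed: the box `(i, j)` here is the paper's `(i + 1, j + 1)`.
theorem stmt17_general (ε₁ ε₂ : ℂ) (h2 : ε₂ ≠ 0)
    (hb : ∀ r : ℝ, ε₁ / ε₂ ≠ (r : ℂ))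
    (lam mu : ℕ → ℕ)
    (i j : ℕ) :
    0 < ‖ε₂ * (((ε₁ / ε₂).im : ℂ)) / (1 + ε₁ / ε₂)‖ ∧
    ‖ε₂ * (((ε₁ / ε₂).im : ℂ)) / (1 + ε₁ / ε₂)‖ *
        |((conjP mu j : ℝ) - (i + 1) + (lam i : ℝ) - (j + 1))|
      ≤ ‖-ε₁ * (((conjP mu j : ℤ) - (i + 1) : ℤ) : ℂ) +
          ε₂ * (((lam i : ℤ) - (j + 1) : ℤ) : ℂ)‖ := by
  have him : (ε₁ / ε₂).im ≠ 0 := fun h => hb (ε₁ / ε₂).re (Complex.ext rfl h)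
  refine ⟨norm_mul_im_div_one_add_pos ε₁ ε₂ h2 him, ?_⟩
  have hbound := norm_mul_im_div_one_add_mul_abs_add_le ε₁ ε₂ h2
    ((conjP mu j : ℝ) - (i + 1)) ((lam i : ℝ) - (j + 1))
  push_cast at hbound ⊢
  convert hbound using 3
  ring

/-- Let `ε₁, ε₂ ≠ 0` with `b² = ε₁/ε₂ ∉ ℝ`, and let `D = |ε₂ Im(b²)/(1+b²)|`.  For a box
`(i,j)` of `λ` (0-indexed here; the paper's box is `(i+1,j+1)`) and
`σ = μ'_j - i + λ_i - j` (1-indexed notation), one has `D > 0` and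
`|-ε₁(μ'_j - i) + ε₂(λ_i - j)| ≥ D |σ|`. -/
theorem stmt17 (ε₁ ε₂ : ℂ) (h1 : ε₁ ≠ 0) (h2 : ε₂ ≠ 0)
    (hb : ∀ r : ℝ, ε₁ / ε₂ ≠ (r : ℂ))
    (lam mu : ℕ → ℕ) (hlam : Antitone lam) (hmu : Antitone mu)
    (M : ℕ) (hM : ∀ n, M ≤ n → mu n = 0)
    (i j : ℕ) (hbox : j < lam i) :
    0 < ‖ε₂ * (((ε₁ / ε₂).im : ℂ)) / (1 + ε₁ / ε₂)‖ ∧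
    ‖ε₂ * (((ε₁ / ε₂).im : ℂ)) / (1 + ε₁ / ε₂)‖ *
        |((conjP mu j : ℝ) - (i + 1) + (lam i : ℝ) - (j + 1))|
      ≤ ‖-ε₁ * (((conjP mu j : ℤ) - (i + 1) : ℤ) : ℂ) +
          ε₂ * (((lam i : ℤ) - (j + 1) : ℤ) : ℂ)‖ :=
  stmt17_general ε₁ ε₂ h2 hb lam mu i j
end

section
/- Let b² < 0 be a negative real number and λ, μ partitions. For a box (i,j) ∈ λ, define τ_{ij} = ⌊((−b²)(μ'_j − i) + (λ_i − j))/min(1, −b²)⌋. Then τ is strictly decreasing in i and in j (whenever the corresponding boxes lie in λ), and consequently for any integer s, the number of boxes (i,j) ∈ λ with τ_{ij} = s is at most √(2|λ|). -/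
/-- `τ_{ij} = ⌊((-b²)(μ'_j - i) + (λ_i - j)) / min(1, -b²)⌋` in 1-indexed notation, written
for 0-indexed `(i,j)`. -/
noncomputable def tauB (b2 : ℝ) (lam mu : ℕ → ℕ) (i j : ℕ) : ℤ :=
  ⌊((-b2) * ((conjP mu j : ℝ) - (i + 1)) + ((lam i : ℝ) - (j + 1))) / min 1 (-b2)⌋

/-!
Set `m = min 1 (-b²)`. Moving one box down lowers `μ'_j - i` by one and cannot raise `λ_i`, so
the numerator of `τ` drops by at least `-b² ≥ m`; moving one box right lowers `λ_i - j` by one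
and cannot raise `μ'_j`, so it drops by at least `1 ≥ m`. Either way `τ` drops by at least one,
so within a level set of `τ` no two boxes share a row or a column. Sorting such a set of `q`
boxes by column, the `k`-th one lies in column `≥ k` of its own row, so the rows involved hold
at least `1 + 2 + ⋯ + q` boxes.
-/

open Finset

theorem Int.floor_div_lt_floor_div_of_add_le {m x y : ℝ} (hm : 0 < m) (h : x + m ≤ y) :
    ⌊x / m⌋ < ⌊y / m⌋ := by
  have h' : x / m + 1 ≤ y / m := by
    rw [div_add_one hm.ne']
    gcongr
  rw [← Int.add_one_le_iff, ← Int.floor_add_one]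
  exact Int.floor_mono h'

theorem Finset.sum_range_card_le_sum (t : Finset ℕ) : ∑ i ∈ range #t, i ≤ ∑ i ∈ t, i := by
  induction t using Finset.induction_on_max with
  | empty => simp
  | insert a s hlt ih =>
    have hcard_le : #s ≤ a := by
      simpa using card_le_card fun x hx => mem_range.2 (hlt x hx)
    have ha : a ∉ s := fun h => (hlt a h).false
    rw [card_insert_of_notMem ha, sum_range_succ, sum_insert ha]
    omega

theorem conjP_antitone_s18 {mu : ℕ → ℕ} {M : ℕ} (hM : ∀ n, M ≤ n → mu n = 0) :
    Antitone (conjP mu) := by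
  intro j j' hjj'
  refine Set.ncard_le_ncard (fun i hi => lt_of_le_of_lt hjj' hi) ((Set.finite_Iio M).subset ?_)
  intro i (hi : j < mu i)
  refine Set.mem_Iio.2 (not_le.1 fun hMi => ?_)
  rw [hM i hMi] at hi
  exact Nat.not_lt_zero j hi

section tauB

variable {b2 : ℝ} {lam mu : ℕ → ℕ}

theorem tauB_strictAnti_left (hb : b2 < 0) (hlam : Antitone lam) (j : ℕ) :
    StrictAnti fun i => tauB b2 lam mu i j := by
  refine strictAnti_nat_of_succ_lt fun i => ?_
  apply Int.floor_div_lt_floor_div_of_add_le (lt_min one_pos (neg_pos.2 hb))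
  have hrow : (lam (i + 1) : ℝ) ≤ lam i := by exact_mod_cast hlam i.le_succ
  have := min_le_right 1 (-b2)
  push_cast
  linarith

theorem tauB_strictAnti_right (hb : b2 < 0) {M : ℕ} (hM : ∀ n, M ≤ n → mu n = 0) (i : ℕ) :
    StrictAnti (tauB b2 lam mu i) := by
  refine strictAnti_nat_of_succ_lt fun j => ?_
  apply Int.floor_div_lt_floor_div_of_add_le (lt_min one_pos (neg_pos.2 hb))
  have hcol : (conjP mu (j + 1) : ℝ) ≤ conjP mu j := by
    exact_mod_cast conjP_antitone_s18 hM j.le_succ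
  have := min_le_left 1 (-b2)
  push_cast
  nlinarith [mul_le_mul_of_nonneg_left hcol (neg_pos.2 hb).le]

end tauB

theorem card_mul_succ_le_two_mul_sum_of_injOn {lam : ℕ → ℕ} {N : ℕ} (hN : ∀ n, N ≤ n → lam n = 0)
    (F : Finset (ℕ × ℕ)) (hbox : ∀ p ∈ F, p.2 < lam p.1)
    (hrow : Set.InjOn Prod.fst (F : Set (ℕ × ℕ))) (hcol : Set.InjOn Prod.snd (F : Set (ℕ × ℕ))) :
    #F * (#F + 1) ≤ 2 * ∑ i ∈ range N, lam i := by
  have hcols : ∑ i ∈ range #F, i ≤ ∑ p ∈ F, p.2 := by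
    rw [← card_image_of_injOn hcol, ← sum_image (f := fun i => i) fun p hp q hq => hcol hp hq]
    exact sum_range_card_le_sum _
  have hboxes : ∑ p ∈ F, (p.2 + 1) ≤ ∑ p ∈ F, lam p.1 := sum_le_sum hbox
  have hrows : ∑ p ∈ F, lam p.1 ≤ ∑ i ∈ range N, lam i := by
    rw [← sum_image fun p hp q hq => hrow hp hq]
    refine sum_le_sum_of_subset fun i hi => ?_
    obtain ⟨p, hp, rfl⟩ := mem_image.1 hi
    by_contra hpN
    have := hN p.1 (not_lt.1 (mem_range.not.1 hpN))
    have := hbox p hp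
    omega
  have hgauss := sum_range_id_mul_two (#F + 1)
  rw [sum_range_succ, Nat.add_sub_cancel] at hgauss
  rw [sum_add_distrib, sum_const, smul_eq_mul, mul_one] at hboxes
  nlinarith

theorem stmt18_general (b2 : ℝ) (hb : b2 < 0)
    (lam mu : ℕ → ℕ) (hlam : Antitone lam)
    (N : ℕ) (hN : ∀ n, N ≤ n → lam n = 0)
    (M : ℕ) (hM : ∀ n, M ≤ n → mu n = 0) :
    (∀ i j : ℕ, j < lam i → j < lam (i + 1) →
      tauB b2 lam mu (i + 1) j < tauB b2 lam mu i j) ∧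
    (∀ i j : ℕ, j + 1 < lam i →
      tauB b2 lam mu i (j + 1) < tauB b2 lam mu i j) ∧
    (∀ s : ℤ, (Set.ncard {p : ℕ × ℕ | p.2 < lam p.1 ∧ tauB b2 lam mu p.1 p.2 = s} : ℝ)
      ≤ Real.sqrt (2 * ∑ i ∈ Finset.range N, (lam i : ℝ))) := by
  have hdown := tauB_strictAnti_left (mu := mu) hb hlam
  have hright := tauB_strictAnti_right (lam := lam) hb hM
  refine ⟨fun i j _ _ => hdown j i.lt_succ_self, fun i j _ => hright i j.lt_succ_self, fun s => ?_⟩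
  set S := {p : ℕ × ℕ | p.2 < lam p.1 ∧ tauB b2 lam mu p.1 p.2 = s}
  have hrow : Set.InjOn Prod.fst S := fun p hp q hq h =>
    Prod.ext h ((hright p.1).injective (hp.2.trans (h ▸ hq.2).symm))
  have hcol : Set.InjOn Prod.snd S := fun p hp q hq h =>
    Prod.ext ((hdown p.2).injective (hp.2.trans (h ▸ hq.2).symm)) h
  have hfin : S.Finite := by
    refine Set.Finite.of_finite_image ((Set.finite_Iio N).subset ?_) hrow
    rintro _ ⟨p, hp, rfl⟩
    by_contra hpN
    have := hN p.1 (not_lt.1 hpN)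
    have := hp.1
    omega
  obtain ⟨F, hF⟩ := hfin.exists_finset_coe
  rw [← hF] at hrow hcol ⊢
  have hstair := card_mul_succ_le_two_mul_sum_of_injOn hN F
    (fun p hp => (hF ▸ hp : p ∈ S).1) hrow hcol
  rw [Set.ncard_coe_finset]
  apply Real.le_sqrt_of_sq_le
  exact_mod_cast (Nat.pow_two _).trans_le ((Nat.mul_le_mul_left _ (#F).le_succ).trans hstair)

/-- For `b² < 0` and partitions `λ, μ`, the quantity `τ_{ij}` is strictly decreasing in `i`
and in `j` among boxes of `λ`; consequently, for any integer `s`, the number of boxes of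
`λ` with `τ_{ij} = s` is at most `√(2|λ|)`. -/
theorem stmt18 (b2 : ℝ) (hb : b2 < 0)
    (lam mu : ℕ → ℕ) (hlam : Antitone lam) (hmu : Antitone mu)
    (N : ℕ) (hN : ∀ n, N ≤ n → lam n = 0)
    (M : ℕ) (hM : ∀ n, M ≤ n → mu n = 0) :
    (∀ i j : ℕ, j < lam i → j < lam (i + 1) →
      tauB b2 lam mu (i + 1) j < tauB b2 lam mu i j) ∧
    (∀ i j : ℕ, j + 1 < lam i →
      tauB b2 lam mu i (j + 1) < tauB b2 lam mu i j) ∧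
    (∀ s : ℤ, (Set.ncard {p : ℕ × ℕ | p.2 < lam p.1 ∧ tauB b2 lam mu p.1 p.2 = s} : ℝ)
      ≤ Real.sqrt (2 * ∑ i ∈ Finset.range N, (lam i : ℝ))) :=
  stmt18_general b2 hb lam mu hlam N hN M hM
end
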